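/- arXiv:1606.09313 — 3 statements merged into one kernel-verified Lean document; each statement's English description precedes it below -/
import Mathlib

section
/- (Weyl inequality, upper form) Let H and V be N×N Hermitian complex matrices, and let λ↓_0(M) ≥ λ↓_1(M) ≥ … ≥ λ↓_{N−1}(M) denote eigenvalues in decreasing order with multiplicity. Then for all indices j, k with 0 ≤ k ≤ j ≤ N−1, one has λ↓_j(H+V) ≤ λ↓_k(H) + λ↓_{j−k}(V). -/
open scoped Matrix.Norms.L2Operator

/-- The eigenvalues of a Hermitian matrix, listed in decreasing order (with multiplicity):
`sortedEigenvaluesDesc hA j` is `λ↓_j`. Out-of-range indices yield the junk value `0`. -/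
noncomputable def Matrix.IsHermitian.sortedEigenvaluesDesc {n : Type*} [Fintype n] [DecidableEq n]
    {A : Matrix n n ℂ} (hA : A.IsHermitian) (j : ℕ) : ℝ :=
  ((Finset.univ.val.map hA.eigenvalues).sort (· ≤ ·)).reverse.getD j 0

/-!
Courant–Fischer style dimension count. Let `u`, `v`, `w` be orthonormal eigenbases of `H + V`,
`H`, `V`, each ordered by decreasing eigenvalue. The span of `u₀, …, u_j` (dimension `j + 1`),
the span of `v_k, v_{k+1}, …` (dimension `N - k`) and the span of `w_{j-k}, w_{j-k+1}, …`
(dimension `N - j + k`) have total dimension `2N + 1`, so they share a nonzero vector `x`.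
Its Rayleigh quotient is at least `λ↓_j(H+V)` on the first space and splits as a sum of Rayleigh
quotients of `H` and `V`, which are at most `λ↓_k(H)` and `λ↓_{j-k}(V)` on the other two.
-/

open Module Submodule
open scoped InnerProductSpace

section Dimension

variable {K V : Type*} [DivisionRing K] [AddCommGroup V] [Module K V]

theorem LinearIndependent.finrank_span_image {ι : Type*} {v : ι → V}
    (hv : LinearIndependent K v) (s : Finset ι) : finrank K (span K (v '' s)) = s.card := by
  rw [Set.image_eq_range, finrank_span_eq_card (b := fun i : (s : Set ι) => v i)
    (hv.comp _ Subtype.val_injective)]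
  simp

theorem LinearIndependent.finrank_span_image_Ici {n : ℕ} {v : Fin n → V}
    (hv : LinearIndependent K v) (k : Fin n) : finrank K (span K (v '' Set.Ici k)) = n - k := by
  rw [← Finset.coe_Ici, hv.finrank_span_image, Fin.card_Ici]

theorem LinearIndependent.finrank_span_image_Iic {n : ℕ} {v : Fin n → V}
    (hv : LinearIndependent K v) (k : Fin n) : finrank K (span K (v '' Set.Iic k)) = k + 1 := by
  rw [← Finset.coe_Iic, hv.finrank_span_image, Fin.card_Iic]

variable [FiniteDimensional K V]

theorem Submodule.finrank_add_finrank_le_finrank_add_finrank_inf (U W : Submodule K V) :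
    finrank K U + finrank K W ≤ finrank K V + finrank K ↥(U ⊓ W) := by
  rw [← finrank_sup_add_finrank_inf_eq]
  exact Nat.add_le_add_right (finrank_le _) _

theorem Submodule.exists_mem_inf_inf_ne_zero (U W X : Submodule K V)
    (h : 2 * finrank K V < finrank K U + finrank K W + finrank K X) :
    ∃ x ∈ U ⊓ W ⊓ X, x ≠ 0 := by
  have hUW := finrank_add_finrank_le_finrank_add_finrank_inf U W
  have hUWX := finrank_add_finrank_le_finrank_add_finrank_inf (U ⊓ W) X
  have hne : U ⊓ W ⊓ X ≠ ⊥ := by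
    intro hbot
    rw [hbot, finrank_bot] at hUWX
    omega
  exact exists_mem_ne_zero_of_ne_bot hne

end Dimension

section Rayleigh

variable {𝕜 E : Type*} [RCLike 𝕜] [NormedAddCommGroup E] [InnerProductSpace 𝕜 E]

theorem OrthonormalBasis.repr_apply_eq_zero_of_mem_span {ι : Type*} [Fintype ι]
    (b : OrthonormalBasis ι 𝕜 E) {s : Set ι} {x : E} (hx : x ∈ span 𝕜 (b '' s)) {i : ι}
    (hi : i ∉ s) : b.repr x i = 0 := by
  have hsupp := b.toBasis.repr_support_subset_of_mem_span s (by simpa using hx)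
  rw [← b.coe_toBasis_repr_apply]
  by_contra h
  exact hi (hsupp (Finsupp.mem_support_iff.mpr h))

namespace LinearMap.IsSymmetric

variable [FiniteDimensional 𝕜 E] {n : ℕ} {T : E →ₗ[𝕜] E}

theorem re_inner_apply_eq_sum (hT : T.IsSymmetric) (hn : finrank 𝕜 E = n) (x : E) :
    RCLike.re ⟪x, T x⟫_𝕜 =
      ∑ i, hT.eigenvalues hn i * ‖(hT.eigenvectorBasis hn).repr x i‖ ^ 2 := by
  rw [← (hT.eigenvectorBasis hn).repr.inner_map_map, PiLp.inner_apply, map_sum]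
  refine Finset.sum_congr rfl fun i _ => ?_
  rw [eigenvectorBasis_apply_self_apply, ← smul_eq_mul, inner_smul_right,
    inner_self_eq_norm_sq_to_K]
  simp

theorem re_inner_apply_le_of_mem_span_Ici (hT : T.IsSymmetric) (hn : finrank 𝕜 E = n)
    {k : Fin n} {x : E} (hx : x ∈ span 𝕜 (hT.eigenvectorBasis hn '' Set.Ici k)) :
    RCLike.re ⟪x, T x⟫_𝕜 ≤ hT.eigenvalues hn k * ‖x‖ ^ 2 := by
  rw [hT.re_inner_apply_eq_sum hn, ← (hT.eigenvectorBasis hn).repr.norm_map,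
    EuclideanSpace.norm_sq_eq, Finset.mul_sum]
  refine Finset.sum_le_sum fun i _ => ?_
  by_cases hki : k ≤ i
  · exact mul_le_mul_of_nonneg_right (hT.eigenvalues_antitone hn hki) (sq_nonneg _)
  · simp [OrthonormalBasis.repr_apply_eq_zero_of_mem_span _ hx hki]

theorem eigenvalues_mul_le_re_inner_apply_of_mem_span_Iic (hT : T.IsSymmetric)
    (hn : finrank 𝕜 E = n) {k : Fin n} {x : E}
    (hx : x ∈ span 𝕜 (hT.eigenvectorBasis hn '' Set.Iic k)) :
    hT.eigenvalues hn k * ‖x‖ ^ 2 ≤ RCLike.re ⟪x, T x⟫_𝕜 := by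
  rw [hT.re_inner_apply_eq_sum hn, ← (hT.eigenvectorBasis hn).repr.norm_map,
    EuclideanSpace.norm_sq_eq, Finset.mul_sum]
  refine Finset.sum_le_sum fun i _ => ?_
  by_cases hik : i ≤ k
  · exact mul_le_mul_of_nonneg_right (hT.eigenvalues_antitone hn hik) (sq_nonneg _)
  · simp [OrthonormalBasis.repr_apply_eq_zero_of_mem_span _ hx hik]

theorem eigenvalues_add_le {S : E →ₗ[𝕜] E} (hS : S.IsSymmetric) (hT : T.IsSymmetric)
    (hn : finrank 𝕜 E = n) {i j : ℕ} (hij : i + j < n) :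
    (hS.add hT).eigenvalues hn ⟨i + j, hij⟩ ≤
      hS.eigenvalues hn ⟨i, by omega⟩ + hT.eigenvalues hn ⟨j, by omega⟩ := by
  have hli {R : E →ₗ[𝕜] E} (hR : R.IsSymmetric) :=
    (hR.eigenvectorBasis hn).orthonormal.linearIndependent
  obtain ⟨x, ⟨⟨hxST, hxS⟩, hxT⟩, hx0⟩ := exists_mem_inf_inf_ne_zero
    (span 𝕜 ((hS.add hT).eigenvectorBasis hn '' Set.Iic ⟨i + j, hij⟩))
    (span 𝕜 (hS.eigenvectorBasis hn '' Set.Ici ⟨i, by omega⟩))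
    (span 𝕜 (hT.eigenvectorBasis hn '' Set.Ici ⟨j, by omega⟩))
    (by
      rw [(hli _).finrank_span_image_Iic, (hli hS).finrank_span_image_Ici,
        (hli hT).finrank_span_image_Ici, hn]
      dsimp only
      omega)
  have hST := (hS.add hT).eigenvalues_mul_le_re_inner_apply_of_mem_span_Iic hn hxST
  have hS' := hS.re_inner_apply_le_of_mem_span_Ici hn hxS
  have hT' := hT.re_inner_apply_le_of_mem_span_Ici hn hxT
  rw [add_apply, inner_add_right, map_add] at hST
  refine le_of_mul_le_mul_right ?_ (pow_pos (norm_pos_iff.mpr hx0) 2)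
  linarith

end LinearMap.IsSymmetric

end Rayleigh

namespace Matrix.IsHermitian

variable {n : Type*} [Fintype n] [DecidableEq n]

theorem eigenvalues₀_add_le {A B : Matrix n n ℂ} (hA : A.IsHermitian) (hB : B.IsHermitian)
    {i j : ℕ} (hij : i + j < Fintype.card n) :
    (hA.add hB).eigenvalues₀ ⟨i + j, hij⟩ ≤
      hA.eigenvalues₀ ⟨i, by omega⟩ + hB.eigenvalues₀ ⟨j, by omega⟩ := by
  unfold eigenvalues₀
  convert LinearMap.IsSymmetric.eigenvalues_add_le _ _ _ hij using 3
  exact map_add _ A B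

theorem sortedEigenvaluesDesc_eq_eigenvalues₀ {A : Matrix n n ℂ} (hA : A.IsHermitian) {j : ℕ}
    (hj : j < Fintype.card n) : hA.sortedEigenvaluesDesc j = hA.eigenvalues₀ ⟨j, hj⟩ := by
  have hperm : ((Finset.univ.val.map hA.eigenvalues).sort (· ≤ ·)).Perm
      (List.ofFn hA.eigenvalues₀) := by
    rw [← Multiset.coe_eq_coe, Multiset.sort_eq, ← Fin.univ_val_map,
      show hA.eigenvalues = hA.eigenvalues₀ ∘ (Fintype.equivOfCardEq (Fintype.card_fin _)).symm
        from rfl, ← Multiset.map_map, Multiset.map_univ_val_equiv]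
  have hsort := hperm.eq_reverse_of_sortedLE_of_sortedGE
    (List.sortedLE_iff_pairwise.mpr (Multiset.pairwise_sort _ _))
    hA.eigenvalues₀_antitone.sortedGE_ofFn
  rw [sortedEigenvaluesDesc, hsort, List.reverse_reverse, List.getD_eq_getElem?_getD,
    List.getElem?_ofFn]
  simp [hj]

end Matrix.IsHermitian

/-- Weyl inequality (upper form): for Hermitian `H`, `V` and indices `0 ≤ k ≤ j ≤ N − 1`,
`λ↓_j(H+V) ≤ λ↓_k(H) + λ↓_{j−k}(V)`. -/
theorem weyl_inequality_upper {N : ℕ} (H V : Matrix (Fin N) (Fin N) ℂ)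
    (hH : H.IsHermitian) (hV : V.IsHermitian) :
    ∀ j k : ℕ, k ≤ j → j ≤ N - 1 →
      (hH.add hV).sortedEigenvaluesDesc j ≤
        hH.sortedEigenvaluesDesc k + hV.sortedEigenvaluesDesc (j - k) := by
  intro j k hkj hjN
  obtain ⟨m, rfl⟩ := Nat.exists_eq_add_of_le hkj
  rcases Nat.eq_zero_or_pos N with rfl | hN
  · simp [Matrix.IsHermitian.sortedEigenvaluesDesc]
  have hkm : k + m < Fintype.card (Fin N) := by simp only [Fintype.card_fin]; omega
  rw [Nat.add_sub_cancel_left, (hH.add hV).sortedEigenvaluesDesc_eq_eigenvalues₀ hkm,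
    hH.sortedEigenvaluesDesc_eq_eigenvalues₀, hV.sortedEigenvaluesDesc_eq_eigenvalues₀]
  exact hH.eigenvalues₀_add_le hV hkm
end

section
/- Let A be a d×d Hermitian complex matrix with d ≥ 2 and B an m×m Hermitian complex matrix. Then the gap between the two smallest eigenvalues of the Kronecker sum is at most the gap of A: λ_1(A ⊗ 1_m + 1_d ⊗ B) − λ_0(A ⊗ 1_m + 1_d ⊗ B) ≤ λ_1(A) − λ_0(A). -/
open scoped Kronecker

/-!
Conjugating by the Kronecker product of the eigenvector unitaries of `A` and `B` diagonalises the
Kronecker sum, so its eigenvalues are the sums `α i + β j` of eigenvalues of `A` and `B`. With `μ`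
the least `β j`, every such sum is at least `λ₀(A) + μ`, while `λ₀(A) + μ` and `λ₁(A) + μ` are two
of them, so the second smallest is at most `λ₁(A) + μ`.
-/

/-- The eigenvalues of a Hermitian matrix, listed in increasing order (with multiplicity):
`sortedEigenvalues hA j` is `λ_j`. Out-of-range indices yield the junk value `0`. -/
noncomputable def Matrix.IsHermitian.sortedEigenvalues {n : Type*} [Fintype n] [DecidableEq n]
    {A : Matrix n n ℂ} (hA : A.IsHermitian) (j : ℕ) : ℝ :=
  ((Finset.univ.val.map hA.eigenvalues).sort (· ≤ ·)).getD j 0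

namespace Multiset

variable {α : Type*} [LinearOrder α] {s : Multiset α} {a b : α}

theorem sort_getD_zero_le (x : α) (ha : a ∈ s) : (s.sort (· ≤ ·)).getD 0 x ≤ a := by
  rw [← mem_sort (· ≤ ·)] at ha
  have hs := pairwise_sort s (· ≤ ·)
  rcases hl : s.sort (· ≤ ·) with _ | ⟨y, t⟩
  · simp [hl] at ha
  · rw [hl] at ha hs
    exact hs.rel_head ha

theorem sort_getD_zero_mem (x : α) (hs : s ≠ 0) : (s.sort (· ≤ ·)).getD 0 x ∈ s := by
  rw [← mem_sort (· ≤ ·)]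
  rcases hl : s.sort (· ≤ ·) with _ | ⟨y, t⟩
  · rw [← sort_eq s (· ≤ ·), hl] at hs
    exact absurd rfl hs
  · exact List.mem_cons_self

theorem sort_getD_zero_le_sort_getD_one (x : α) (hs : 2 ≤ card s) :
    (s.sort (· ≤ ·)).getD 0 x ≤ (s.sort (· ≤ ·)).getD 1 x := by
  rw [← length_sort (· ≤ ·)] at hs
  have hsorted := pairwise_sort s (· ≤ ·)
  rcases hl : s.sort (· ≤ ·) with _ | ⟨y, _ | ⟨z, t⟩⟩
  all_goals simp only [hl, List.length_cons, List.length_nil] at hs hsorted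
  · omega
  · omega
  · exact hsorted.rel_head (List.mem_cons_of_mem y List.mem_cons_self)

theorem pair_sort_getD_le (x : α) (hs : 2 ≤ card s) :
    {(s.sort (· ≤ ·)).getD 0 x, (s.sort (· ≤ ·)).getD 1 x} ≤ s := by
  rw [← length_sort (· ≤ ·)] at hs
  conv_rhs => rw [← sort_eq s (· ≤ ·)]
  generalize s.sort (· ≤ ·) = l at hs ⊢
  rcases l with _ | ⟨y, _ | ⟨z, t⟩⟩
  all_goals simp only [List.length_cons, List.length_nil] at hs
  · omega
  · omega
  · exact cons_le_cons y (cons_le_cons z (zero_le (t : Multiset α)))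

theorem sort_getD_one_le_of_pair_le (x : α) (hab : a ≤ b) (h : {a, b} ≤ s) :
    (s.sort (· ≤ ·)).getD 1 x ≤ b := by
  have hcard : 2 ≤ (s.sort (· ≤ ·)).length := by
    simpa [length_sort] using card_le_card h
  rw [← sort_eq s (· ≤ ·)] at h
  have hsorted := pairwise_sort s (· ≤ ·)
  generalize s.sort (· ≤ ·) = l at hcard h hsorted ⊢
  rcases l with _ | ⟨y, _ | ⟨z, t⟩⟩
  all_goals simp only [List.length_cons, List.length_nil] at hcard
  · omega
  · omega
  have hz : ∀ w ∈ z :: t, z ≤ w := fun w hw => (List.pairwise_cons.1 hsorted).2.rel_head hw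
  rcases eq_or_ne a y with rfl | hay
  · rw [insert_eq_cons, ← cons_coe, cons_le_cons_iff, singleton_le] at h
    exact hz b h
  · have ha : a ∈ z :: t := by
      simpa [hay] using mem_of_le h (mem_cons_self a {b})
    exact (hz a ha).trans hab

theorem map_univ_val_prodMk_le {ι κ β : Type*} [Fintype ι] [Fintype κ] (f : ι × κ → β) (j : κ) :
    (Finset.univ.val.map fun i => f (i, j)) ≤ Finset.univ.val.map f := by
  change map (f ∘ fun i => (i, j)) _ ≤ _
  rw [← map_map f (fun i => (i, j))]
  refine map_le_map ((le_iff_subset (Finset.univ.nodup.map (Prod.mk_left_injective j))).2 ?_)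
  exact fun p _ => Finset.mem_univ p

end Multiset

namespace Matrix

open Polynomial

variable {n m : Type*} [Fintype n] [DecidableEq n] [Fintype m] [DecidableEq m]

theorem charpoly_mul_mul_of_mul_eq_one {R : Type*} [CommRing R] {P Q : Matrix n n R}
    (h : Q * P = 1) (M : Matrix n n R) : (P * M * Q).charpoly = M.charpoly := by
  rw [charpoly_mul_comm, ← Matrix.mul_assoc, h, Matrix.one_mul]

theorem kroneckerSum_conj {R : Type*} [CommRing R] {U U' : Matrix n n R} {V V' : Matrix m m R}
    (hU : U * U' = 1) (hV : V * V' = 1) (D : Matrix n n R) (E : Matrix m m R) :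
    (U * D * U') ⊗ₖ (1 : Matrix m m R) + (1 : Matrix n n R) ⊗ₖ (V * E * V') =
      U ⊗ₖ V * (D ⊗ₖ 1 + 1 ⊗ₖ E) * U' ⊗ₖ V' := by
  rw [Matrix.mul_add, Matrix.add_mul, ← mul_kronecker_mul, ← mul_kronecker_mul,
    ← mul_kronecker_mul, ← mul_kronecker_mul, Matrix.mul_one, Matrix.mul_one,
    hU, hV]

variable {𝕜 : Type*} [RCLike 𝕜]

theorem IsHermitian.charpoly_kroneckerSum {A : Matrix n n 𝕜} {B : Matrix m m 𝕜}
    (hA : A.IsHermitian) (hB : B.IsHermitian) :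
    (A ⊗ₖ (1 : Matrix m m 𝕜) + (1 : Matrix n n 𝕜) ⊗ₖ B).charpoly =
      ∏ p : n × m, (X - C ((hA.eigenvalues p.1 + hB.eigenvalues p.2 : ℝ) : 𝕜)) := by
  conv_lhs => rw [hA.spectral_theorem, hB.spectral_theorem, Unitary.conjStarAlgAut_apply,
    Unitary.conjStarAlgAut_apply, kroneckerSum_conj (Unitary.coe_mul_star_self _)
      (Unitary.coe_mul_star_self _)]
  rw [charpoly_mul_mul_of_mul_eq_one (by rw [← mul_kronecker_mul, Unitary.coe_star_mul_self,
    Unitary.coe_star_mul_self, one_kronecker_one]), ← diagonal_one, ← diagonal_one,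
    diagonal_kronecker_diagonal, diagonal_kronecker_diagonal, diagonal_add, charpoly_diagonal]
  simp

theorem IsHermitian.map_eigenvalues_eq_of_charpoly_eq {H : Matrix n n 𝕜} (hH : H.IsHermitian)
    {f : n → ℝ} (h : H.charpoly = ∏ i, (X - C (f i : 𝕜))) :
    Finset.univ.val.map hH.eigenvalues = Finset.univ.val.map f := by
  apply Multiset.map_injective (RCLike.ofReal_injective (K := 𝕜))
  rw [Multiset.map_map, Multiset.map_map, ← hH.roots_charpoly_eq_eigenvalues, h, roots_prod]
  · simp
  · simp [Finset.prod_ne_zero_iff, X_sub_C_ne_zero]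

end Matrix

open Multiset in
/-- The gap between the two smallest eigenvalues of the Kronecker sum `A ⊗ 1_m + 1_d ⊗ B`
is at most the gap of `A`:
`λ_1(A ⊗ 1_m + 1_d ⊗ B) − λ_0(A ⊗ 1_m + 1_d ⊗ B) ≤ λ_1(A) − λ_0(A)`. -/
theorem gap_kroneckerSum_le {d m : ℕ} (hd : 2 ≤ d) (hm : 0 < m)
    (A : Matrix (Fin d) (Fin d) ℂ) (B : Matrix (Fin m) (Fin m) ℂ)
    (hA : A.IsHermitian) (hB : B.IsHermitian)
    (hK : (A ⊗ₖ (1 : Matrix (Fin m) (Fin m) ℂ) +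
      (1 : Matrix (Fin d) (Fin d) ℂ) ⊗ₖ B).IsHermitian) :
    hK.sortedEigenvalues 1 - hK.sortedEigenvalues 0 ≤
      hA.sortedEigenvalues 1 - hA.sortedEigenvalues 0 := by
  set g : Fin d × Fin m → ℝ := fun p => hA.eigenvalues p.1 + hB.eigenvalues p.2
  have hK_eigenvalues : Finset.univ.val.map hK.eigenvalues = Finset.univ.val.map g :=
    hK.map_eigenvalues_eq_of_charpoly_eq (hA.charpoly_kroneckerSum hB)
  simp only [Matrix.IsHermitian.sortedEigenvalues, hK_eigenvalues]
  set tA := Finset.univ.val.map hA.eigenvalues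
  have hcardA : 2 ≤ card tA := by simpa [tA] using hd
  obtain ⟨j₀, -, hj₀⟩ := Finset.univ.exists_min_image hB.eigenvalues
    (Finset.univ_nonempty_iff.2 ⟨⟨0, hm⟩⟩)
  set μ := hB.eigenvalues j₀
  have hlow : (tA.sort (· ≤ ·)).getD 0 0 + μ ≤ ((Finset.univ.val.map g).sort (· ≤ ·)).getD 0 0 := by
    obtain ⟨p, -, hp⟩ := mem_map.1 <| sort_getD_zero_mem (s := Finset.univ.val.map g) 0 <|
      fun h => by simpa [h] using mem_map_of_mem g (Finset.mem_univ_val (⟨0, by omega⟩, j₀))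
    rw [← hp]
    exact add_le_add (sort_getD_zero_le 0 (mem_map_of_mem _ (Finset.mem_univ_val _)))
      (hj₀ _ (Finset.mem_univ _))
  have hup : ((Finset.univ.val.map g).sort (· ≤ ·)).getD 1 0 ≤ (tA.sort (· ≤ ·)).getD 1 0 + μ := by
    refine sort_getD_one_le_of_pair_le 0
      (add_le_add_left (sort_getD_zero_le_sort_getD_one 0 hcardA) _) ?_
    rw [insert_eq_cons, ← map_singleton (· + μ), ← map_cons (· + μ)]
    calc _ ≤ tA.map (· + μ) := map_le_map (pair_sort_getD_le 0 hcardA)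
      _ = Finset.univ.val.map fun i => g (i, j₀) := map_map _ _ _
      _ ≤ _ := map_univ_val_prodMk_le g j₀
  linarith
end

section
/- (Assumption 1 holds for Gaussian ensembles) Let n ≥ 1 and let G be a random n×n real matrix whose n² entries are independent standard real Gaussians (mean 0, variance 1), and set M = (G + Gᵀ)/2, a random real symmetric matrix. Then for every real number a and every ε > 0, the probability that all n eigenvalues of M lie in the open interval (a − ε, a + ε) is strictly positive. -/
/-!
Every eigenvalue of a symmetric matrix lies in a Gershgorin disc, so if all entries of `G` are
within `δ = ε / (n + 1)` of those of `a • 1`, then so are those of `M = (G + Gᵀ) / 2`, and every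
eigenvalue of `M` is within `n δ < ε` of `a`. Such matrices form a sup-norm ball around `a • 1`,
which has positive measure because the Gaussian measure charges every nonempty open set.
-/

open MeasureTheory ProbabilityTheory Matrix

/-- The symmetrization `M = (G + Gᵀ)/2` of a square real matrix `G`. -/
noncomputable def symPart {n : ℕ} (G : Matrix (Fin n) (Fin n) ℝ) : Matrix (Fin n) (Fin n) ℝ :=
  (2 : ℝ)⁻¹ • (G + Gᵀ)

/-- The symmetrization of a real matrix is Hermitian (i.e. symmetric), so it has `n` real
eigenvalues counted with multiplicity. -/
theorem symPart_isHermitian {n : ℕ} (G : Matrix (Fin n) (Fin n) ℝ) :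
    (symPart G).IsHermitian := by
  unfold symPart Matrix.IsHermitian
  ext i j
  simp [Matrix.conjTranspose_apply, Matrix.transpose_apply]
  ring

lemma isOpenPosMeasure_gaussianReal (μ : ℝ) {v : NNReal} (hv : v ≠ 0) :
    Measure.IsOpenPosMeasure (gaussianReal μ v) :=
  (gaussianReal_absolutelyContinuous' μ hv).isOpenPosMeasure

namespace Matrix.IsHermitian

variable {𝕜 ι : Type*} [RCLike 𝕜] [Fintype ι] [DecidableEq ι] {A : Matrix ι ι 𝕜}

lemma hasEigenvalue_eigenvalues (hA : A.IsHermitian) (i : ι) :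
    Module.End.HasEigenvalue (toLin' A) (hA.eigenvalues i : 𝕜) := by
  refine Module.End.hasEigenvalue_of_hasEigenvector (x := ⇑(hA.eigenvectorBasis i)) ⟨?_, ?_⟩
  · rw [Module.End.mem_eigenspace_iff, toLin'_apply, hA.mulVec_eigenvectorBasis,
      RCLike.real_smul_eq_coe_smul (K := 𝕜)]
  · intro h
    exact hA.eigenvectorBasis.orthonormal.ne_zero i (by simpa using congrArg (WithLp.toLp 2) h)

lemma abs_eigenvalues_sub_le {a δ : ℝ} (hA : A.IsHermitian)
    (hdiag : ∀ k, ‖A k k - a‖ ≤ δ) (hoff : ∀ k j, k ≠ j → ‖A k j‖ ≤ δ) (i : ι) :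
    |hA.eigenvalues i - a| ≤ Fintype.card ι * δ := by
  obtain ⟨k, hk⟩ := eigenvalue_mem_ball (hA.hasEigenvalue_eigenvalues i)
  rw [Metric.mem_closedBall, dist_eq_norm] at hk
  have hrow : ∑ j ∈ Finset.univ.erase k, ‖A k j‖ ≤ (Fintype.card ι - 1) * δ := by
    have hcard : ((Finset.univ.erase k).card : ℝ) = Fintype.card ι - 1 := by
      rw [Finset.card_erase_of_mem (Finset.mem_univ k), Finset.card_univ,
        Nat.cast_pred (Fintype.card_pos_iff.mpr ⟨k⟩)]
    rw [← hcard, ← nsmul_eq_mul]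
    exact Finset.sum_le_card_nsmul _ _ δ fun j hj => hoff k j (Finset.ne_of_mem_erase hj).symm
  calc |hA.eigenvalues i - a| = ‖(hA.eigenvalues i : 𝕜) - A k k + (A k k - a)‖ := by
        rw [sub_add_sub_cancel, ← RCLike.ofReal_sub, RCLike.norm_ofReal]
    _ ≤ ‖(hA.eigenvalues i : 𝕜) - A k k‖ + ‖A k k - a‖ := norm_add_le _ _
    _ ≤ (Fintype.card ι - 1) * δ + δ := add_le_add (hk.trans hrow) (hdiag k)
    _ = Fintype.card ι * δ := by ring

end Matrix.IsHermitian

section symPart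

variable {n : ℕ} (G : Matrix (Fin n) (Fin n) ℝ)

lemma symPart_apply (i j : Fin n) : symPart G i j = (G i j + G j i) / 2 := by
  simp only [symPart, Matrix.smul_apply, Matrix.add_apply, transpose_apply, smul_eq_mul]
  ring

lemma symPart_apply_self (i : Fin n) : symPart G i i = G i i := by
  rw [symPart_apply]; ring

lemma abs_symPart_apply_lt {δ : ℝ} {i j : Fin n} (hij : |G i j| < δ) (hji : |G j i| < δ) :
    |symPart G i j| < δ := by
  rw [symPart_apply, abs_div, abs_two]
  linarith [abs_add_le (G i j) (G j i)]

lemma abs_eigenvalues_symPart_sub_le {a δ : ℝ}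
    (hG : ∀ k j, |G k j - if k = j then a else 0| < δ) (i : Fin n) :
    |(symPart_isHermitian G).eigenvalues i - a| ≤ n * δ := by
  have hdiag k : ‖symPart G k k - a‖ ≤ δ := by
    simpa [symPart_apply_self] using (hG k k).le
  have hoff k j (hkj : k ≠ j) : ‖symPart G k j‖ ≤ δ := by
    have hkj' := hG k j
    have hjk' := hG j k
    rw [if_neg hkj, sub_zero] at hkj'
    rw [if_neg (Ne.symm hkj), sub_zero] at hjk'
    exact (abs_symPart_apply_lt G hkj' hjk').le
  simpa using (symPart_isHermitian G).abs_eigenvalues_sub_le hdiag hoff i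

end symPart

theorem gaussian_eigenvalues_near_scalar_pos_general (n : ℕ) (a ε : ℝ) (hε : 0 < ε) :
    0 < (Measure.pi fun _ : Fin n => Measure.pi fun _ : Fin n => gaussianReal 0 1)
      {G : Fin n → Fin n → ℝ |
        ∀ i : Fin n,
          (symPart_isHermitian (Matrix.of G)).eigenvalues i ∈ Set.Ioo (a - ε) (a + ε)} := by
  have := isOpenPosMeasure_gaussianReal 0 one_ne_zero
  have := Measure.pi.isOpenPosMeasure fun _ : Fin n => gaussianReal 0 1
  set δ := ε / (n + 1)
  have hδ : 0 < δ := by positivity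
  have hnδ : n * δ < ε := by
    rw [mul_div_assoc', div_lt_iff₀ (by positivity)]
    linarith
  refine (Metric.measure_ball_pos _ (fun i j : Fin n => if i = j then a else 0) hδ).trans_le
    (measure_mono fun G hG i => ?_)
  simp only [Metric.mem_ball, dist_pi_lt_iff hδ, Real.dist_eq] at hG
  rw [← Real.ball_eq_Ioo, Metric.mem_ball, Real.dist_eq]
  exact (abs_eigenvalues_symPart_sub_le (of G) hG i).trans_lt hnδ

/-- Assumption 1 holds for Gaussian ensembles: if `G` is a random `n×n` real matrix whose `n²`
entries are i.i.d. standard real Gaussians (the underlying measure being the product over the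
entries of the standard Gaussian of mean 0 and variance 1) and `M = (G + Gᵀ)/2`, then for every
real `a` and every `ε > 0`, the probability that all `n` eigenvalues of `M` lie in the open
interval `(a − ε, a + ε)` is strictly positive. -/
theorem gaussian_eigenvalues_near_scalar_pos (n : ℕ) (hn : 1 ≤ n) (a ε : ℝ) (hε : 0 < ε) :
    0 < (Measure.pi fun _ : Fin n => Measure.pi fun _ : Fin n => gaussianReal 0 1)
      {G : Fin n → Fin n → ℝ |
        ∀ i : Fin n,
          (symPart_isHermitian (Matrix.of G)).eigenvalues i ∈ Set.Ioo (a - ε) (a + ε)} :=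
  gaussian_eigenvalues_near_scalar_pos_general n a ε hε
end
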